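/- Let Z(n) be the n×n matrix with rational entries Z_{s,t} = χ_B(C(s+t,s)) ∈ {−1,0,1} for 0 ≤ s,t < n, where χ_B(x)=0 for x even, 1 for x≡1 mod 4, −1 for x≡3 mod 4. Let f : ℕ → ℚ satisfy f(0)=1, f(1)=−1, f(2^a+b)=3f(b) if 2b<2^a and f(b)/3 otherwise (0 ≤ b < 2^a). Then det(Z(n)) = Π_{k=0}^{n−1} f(k). -/

import Mathlib

/-- The nontrivial Dirichlet character mod 4 evaluated on a natural number,
with value 0 on even numbers, as a rational number. -/
def chiB (x : ℕ) : ℚ :=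
  if x % 2 = 0 then 0 else if x % 4 = 1 then 1 else -1

/-- `f(0)=1`, `f(1)=-1`, and for `n = 2^a + b ≥ 2` with `0 ≤ b < 2^a`:
`f(n) = 3 f(b)` if `2b < 2^a`, and `f(n) = f(b)/3` otherwise. -/
def beebF : ℕ → ℚ
  | 0 => 1
  | 1 => -1
  | (n + 2) =>
      if 2 * ((n + 2) - 2 ^ Nat.log2 (n + 2)) < 2 ^ Nat.log2 (n + 2) then
        3 * beebF ((n + 2) - 2 ^ Nat.log2 (n + 2))
      else
        beebF ((n + 2) - 2 ^ Nat.log2 (n + 2)) / 3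
decreasing_by
  all_goals
    have h2 : 2 ≤ 2 ^ Nat.log2 (n + 2) := by
      have : (1:ℕ) ≤ Nat.log2 (n + 2) := by
        rw [Nat.le_log2 (by omega)]; omega
      calc (2:ℕ) = 2 ^ 1 := by norm_num
      _ ≤ 2 ^ Nat.log2 (n + 2) := Nat.pow_le_pow_right (by norm_num) this
  all_goals omega


/-!
Write `Z(n)` for the matrix and `n = 2^(a+1) + b` with `0 < b ≤ 2^(a+1)`.
Modulo 4 we have `(1 + X)^(2^(j+1)) ≡ 1 + 2 X^(2^j) + X^(2^(j+1))`; together with Lucas's theorem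
modulo 2 this shows that shifting a column index `t ↦ 2^a + t` multiplies row `s < 2^a` by the
sign `σ(s) = ±1` of its top binary digit, and that `Z` vanishes on `[2^a, 2^(a+1))²`.
So `Z(2^a + b)` has the block form `[[A, (SA)|_b], [(AS)|_b, 0]]` with `A = Z(2^a)`, `S = diag σ`.
The matrix `Y` built recursively as `[[-1, 0], [2Y', 1]]` satisfies `AY = SA`, and one level up
`3 ASY = -WAW` with `W = diag(3, …, 3, 1, …, 1)`. Hence the Schur complement of `A` is
`W Z(b) W / 3` restricted to the first `b` indices, which gives
`det Z(2^(a+1) + b) = det Z(2^(a+1)) · ∏_{k<b} w_k²/3 · det Z(b)`: the recursion of `f`.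
-/

open Matrix Finset

open Polynomial in
lemma X_add_one_pow_two_pow_succ (j : ℕ) :
    ((X + 1 : (ZMod 4)[X]) ^ 2 ^ (j + 1)) = X ^ 2 ^ (j + 1) + 2 * X ^ 2 ^ j + 1 := by
  induction j with
  | zero => ring
  | succ j ih =>
    rw [pow_succ 2 (j + 1), pow_mul, ih]
    linear_combination (X ^ 2 ^ j + X ^ 2 ^ (j + 1) + X ^ (2 ^ j + 2 ^ (j + 1))) *
      CharP.ofNat_eq_zero (ZMod 4)[X] 4

open Polynomial in
lemma choose_two_pow_succ_add_modEq {j s : ℕ} (n : ℕ) (hs : s < 2 ^ (j + 1)) :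
    (2 ^ (j + 1) + n).choose s ≡
      n.choose s + 2 * (if 2 ^ j ≤ s then n.choose (s - 2 ^ j) else 0) [MOD 4] := by
  rw [← ZMod.natCast_eq_natCast_iff, ← coeff_X_add_one_pow (ZMod 4), pow_add,
    X_add_one_pow_two_pow_succ]
  simp [add_mul, mul_assoc, coeff_X_pow_mul', coeff_X_add_one_pow, hs.not_ge]
  ring

lemma div_two_pow_mod_two_sub_two_pow {i j s : ℕ} (hs : 2 ^ j ≤ s) (hi : i < j) :
    (s - 2 ^ j) / 2 ^ i % 2 = s / 2 ^ i % 2 := by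
  have h : 2 ^ j = 2 ^ i * (2 * 2 ^ (j - i - 1)) := by
    rw [← pow_succ', ← pow_add]; congr 1; omega
  have hs' : s = s - 2 ^ j + 2 ^ i * (2 * 2 ^ (j - i - 1)) := by omega
  conv_rhs => rw [hs', Nat.add_mul_div_left _ _ (by positivity), Nat.add_mul_mod_self_left]

lemma odd_choose_sub_two_pow {n j s : ℕ} (hs : 2 ^ j ≤ s) (hs' : s < 2 ^ (j + 1))
    (hodd : Odd (n.choose s)) : Odd (n.choose (s - 2 ^ j)) := by
  have hj : 2 ^ (j + 1) = 2 * 2 ^ j := pow_succ' 2 j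
  have h1 : s / 2 ^ j = 1 := Nat.div_eq_of_lt_le (by omega) (by omega)
  have h0 : (s - 2 ^ j) / 2 ^ j = 0 := Nat.div_eq_of_lt (by omega)
  -- Lucas: both binomials share the digits below `j`; digit `j` contributes `n / 2 ^ j` resp. `1`.
  have lucas (k : ℕ) := (ZMod.intCast_eq_intCast_iff' _ _ 2).2
    (Choose.choose_modEq_choose_mul_prod_range_choose (p := 2) (n := n) (k := k) j)
  have key := lucas s
  have key' := lucas (s - 2 ^ j)
  push_cast [h1, h0, Nat.choose_one_right, Nat.choose_zero_right] at key key'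
  rw [prod_congr rfl fun i hi => by
    rw [div_two_pow_mod_two_sub_two_pow hs (mem_range.1 hi)]] at key'
  rw [← ZMod.natCast_ne_zero_iff_odd] at hodd ⊢
  rw [key', one_mul]
  exact right_ne_zero_of_mul (key ▸ hodd)

lemma chiB_eq_of_modEq {x y : ℕ} (h : x ≡ y [MOD 4]) : chiB x = chiB y := by
  unfold chiB Nat.ModEq at *
  have : x % 2 = y % 2 := by omega
  rw [this, h]

lemma chiB_add_two_mul {x y : ℕ} (h : Odd x → Odd y) : chiB (x + 2 * y) = -chiB x := by
  rcases Nat.even_or_odd x with hx | hx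
  · simp [chiB, Nat.even_iff.1 hx, Nat.add_mod]
  · have hx2 := Nat.odd_iff.1 hx
    have hy2 := Nat.odd_iff.1 (h hx)
    unfold chiB
    split_ifs <;> norm_num <;> omega

def binomChi (s t : ℕ) : ℚ := chiB ((s + t).choose s)

def halfSign (a k : ℕ) : ℚ := if 2 * k < 2 ^ a then 1 else -1

def halfWeight (a k : ℕ) : ℚ := if 2 * k < 2 ^ a then 3 else 1

lemma binomChi_comm (s t : ℕ) : binomChi s t = binomChi t s := by
  rw [binomChi, binomChi, Nat.choose_symm_add, add_comm]

lemma binomChi_two_pow_add_right {a s : ℕ} (t : ℕ) (hs : s < 2 ^ a) :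
    binomChi s (2 ^ a + t) = halfSign a s * binomChi s t := by
  cases a with
  | zero => simp_all [binomChi, halfSign]
  | succ j =>
    have hj : 2 ^ (j + 1) = 2 * 2 ^ j := pow_succ' 2 j
    rw [binomChi, binomChi, add_left_comm,
      chiB_eq_of_modEq (choose_two_pow_succ_add_modEq (s + t) hs), halfSign]
    split_ifs with hhigh hlow hlow
    · omega
    · rw [neg_one_mul]; exact chiB_add_two_mul (odd_choose_sub_two_pow hhigh hs)
    · simp
    · omega

lemma binomChi_two_pow_add_left {a t : ℕ} (s : ℕ) (ht : t < 2 ^ a) :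
    binomChi (2 ^ a + s) t = binomChi s t * halfSign a t := by
  rw [binomChi_comm, binomChi_two_pow_add_right s ht, binomChi_comm, mul_comm]

lemma binomChi_two_pow_add_two_pow_add {a s t : ℕ} (hs : s < 2 ^ a) (ht : t < 2 ^ a) :
    binomChi (2 ^ a + s) (2 ^ a + t) = 0 := by
  have hsum : 2 ^ a + s + (2 ^ a + t) = 2 ^ (a + 1) + (s + t) := by rw [pow_succ]; ring
  rw [binomChi, hsum,
    chiB_eq_of_modEq (choose_two_pow_succ_add_modEq (s + t) (by rw [pow_succ]; omega)),
    if_pos (Nat.le_add_right _ _), Nat.add_sub_cancel_left, Nat.choose_eq_zero_of_lt (by omega)]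
  simp [chiB]

lemma halfSign_succ_of_lt {a k : ℕ} (hk : k < 2 ^ a) : halfSign (a + 1) k = 1 :=
  if_pos (by rw [pow_succ]; omega)

lemma halfSign_succ_two_pow_add (a k : ℕ) : halfSign (a + 1) (2 ^ a + k) = -1 :=
  if_neg (by rw [pow_succ]; omega)

lemma halfWeight_succ_of_lt {a k : ℕ} (hk : k < 2 ^ a) : halfWeight (a + 1) k = 3 :=
  if_pos (by rw [pow_succ]; omega)

lemma halfWeight_succ_two_pow_add (a k : ℕ) : halfWeight (a + 1) (2 ^ a + k) = 1 :=
  if_neg (by rw [pow_succ]; omega)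

def binomChiMatrix (n : ℕ) : Matrix (Fin n) (Fin n) ℚ := of fun s t => binomChi s t

def signMatrix (a : ℕ) : Matrix (Fin (2 ^ a)) (Fin (2 ^ a)) ℚ := diagonal fun k => halfSign a k

def weightMatrix (a m : ℕ) : Matrix (Fin m) (Fin m) ℚ := diagonal fun k => halfWeight a k

def halvesEquiv (a : ℕ) : Fin (2 ^ a) ⊕ Fin (2 ^ a) ≃ Fin (2 ^ (a + 1)) :=
  finSumFinEquiv.trans (finCongr (by ring))

@[simp] lemma halvesEquiv_inl_val {a : ℕ} (k : Fin (2 ^ a)) :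
    (halvesEquiv a (.inl k) : ℕ) = k :=
  rfl

@[simp] lemma halvesEquiv_inr_val {a : ℕ} (k : Fin (2 ^ a)) :
    (halvesEquiv a (.inr k) : ℕ) = 2 ^ a + k :=
  rfl

lemma submatrix_halvesEquiv_injective (a : ℕ) :
    Function.Injective fun M : Matrix (Fin (2 ^ (a + 1))) (Fin (2 ^ (a + 1))) ℚ =>
      M.submatrix (halvesEquiv a) (halvesEquiv a) :=
  (reindex (halvesEquiv a).symm (halvesEquiv a).symm).injective

/-- Solves `binomChiMatrix (2 ^ a) * Y = signMatrix a * binomChiMatrix (2 ^ a)`; the recursion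
comes from the block form `binomChiMatrix_two_pow_succ_submatrix`. -/
def intertwiner : (a : ℕ) → Matrix (Fin (2 ^ a)) (Fin (2 ^ a)) ℚ
  | 0 => 1
  | a + 1 => (fromBlocks (-1) 0 ((2 : ℚ) • intertwiner a) 1).submatrix
      (halvesEquiv a).symm (halvesEquiv a).symm

lemma intertwiner_succ_submatrix (a : ℕ) :
    (intertwiner (a + 1)).submatrix (halvesEquiv a) (halvesEquiv a) =
      fromBlocks (-1) 0 ((2 : ℚ) • intertwiner a) 1 := by
  simp [intertwiner, submatrix_submatrix]

lemma binomChiMatrix_two_pow_succ_submatrix (a : ℕ) :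
    (binomChiMatrix (2 ^ (a + 1))).submatrix (halvesEquiv a) (halvesEquiv a) =
      fromBlocks (binomChiMatrix (2 ^ a)) (signMatrix a * binomChiMatrix (2 ^ a))
        (binomChiMatrix (2 ^ a) * signMatrix a) 0 := by
  ext (s | s) (t | t) <;>
    simp [binomChiMatrix, signMatrix, binomChi_two_pow_add_right, binomChi_two_pow_add_left,
      binomChi_two_pow_add_two_pow_add]

lemma signMatrix_succ_submatrix (a : ℕ) :
    (signMatrix (a + 1)).submatrix (halvesEquiv a) (halvesEquiv a) = fromBlocks 1 0 0 (-1) := by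
  ext (s | s) (t | t) <;>
    simp [signMatrix, diagonal_apply, one_apply, halfSign_succ_of_lt, halfSign_succ_two_pow_add,
      (halvesEquiv a).injective.eq_iff]
  split_ifs <;> norm_num

lemma weightMatrix_succ_submatrix (a : ℕ) :
    (weightMatrix (a + 1) (2 ^ (a + 1))).submatrix (halvesEquiv a) (halvesEquiv a) =
      fromBlocks ((3 : ℚ) • 1) 0 0 1 := by
  ext (s | s) (t | t) <;>
    simp [weightMatrix, diagonal_apply, one_apply, halfWeight_succ_of_lt,
      halfWeight_succ_two_pow_add, (halvesEquiv a).injective.eq_iff]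

lemma signMatrix_mul_self (a : ℕ) : signMatrix a * signMatrix a = 1 := by
  rw [signMatrix, diagonal_mul_diagonal, ← diagonal_one]
  congr 1
  ext k
  simp only [halfSign]
  split_ifs <;> norm_num

lemma binomChiMatrix_mul_intertwiner (a : ℕ) :
    binomChiMatrix (2 ^ a) * intertwiner a = signMatrix a * binomChiMatrix (2 ^ a) := by
  induction a with
  | zero =>
    have hS : signMatrix 0 = 1 := by
      ext i j; fin_cases i; fin_cases j; simp [signMatrix, halfSign]
    simp [intertwiner, hS]
  | succ a ih =>
    refine submatrix_halvesEquiv_injective a ?_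
    simp only [← submatrix_mul_equiv _ _ _ (halvesEquiv a), binomChiMatrix_two_pow_succ_submatrix,
      intertwiner_succ_submatrix, signMatrix_succ_submatrix, fromBlocks_multiply, fromBlocks_inj]
    refine ⟨?_, ?_, ?_, ?_⟩ <;> simp
    rw [Matrix.mul_assoc, ih, ← Matrix.mul_assoc, signMatrix_mul_self, Matrix.one_mul]
    module

lemma binomChiMatrix_mul_signMatrix_mul_intertwiner (a : ℕ) :
    (3 : ℚ) • (binomChiMatrix (2 ^ (a + 1)) * signMatrix (a + 1) * intertwiner (a + 1)) =
      -(weightMatrix (a + 1) (2 ^ (a + 1)) * binomChiMatrix (2 ^ (a + 1)) *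
        weightMatrix (a + 1) (2 ^ (a + 1))) := by
  refine submatrix_halvesEquiv_injective a ?_
  simp only [submatrix_smul, submatrix_neg, Pi.smul_apply, Pi.neg_apply,
    ← submatrix_mul_equiv _ _ _ (halvesEquiv a), binomChiMatrix_two_pow_succ_submatrix,
    intertwiner_succ_submatrix, signMatrix_succ_submatrix, weightMatrix_succ_submatrix,
    fromBlocks_multiply, fromBlocks_smul, fromBlocks_neg, fromBlocks_inj]
  refine ⟨?_, ?_, ?_, ?_⟩ <;> simp
  rw [Matrix.mul_assoc, binomChiMatrix_mul_intertwiner, ← Matrix.mul_assoc, signMatrix_mul_self,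
    Matrix.one_mul]
  module

lemma binomChiMatrix_two_pow_add_submatrix {a b : ℕ} (hb : b ≤ 2 ^ a) :
    (binomChiMatrix (2 ^ a + b)).submatrix finSumFinEquiv finSumFinEquiv =
      fromBlocks (binomChiMatrix (2 ^ a))
        ((signMatrix a * binomChiMatrix (2 ^ a)).submatrix id (Fin.castLE hb))
        ((binomChiMatrix (2 ^ a) * signMatrix a).submatrix (Fin.castLE hb) id) 0 := by
  ext (s | s) (t | t) <;>
    simp [binomChiMatrix, signMatrix, binomChi_two_pow_add_right, binomChi_two_pow_add_left]
  exact binomChi_two_pow_add_two_pow_add (by omega) (by omega)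

lemma det_binomChiMatrix_two_pow_succ_add {a b : ℕ} (hb : b ≤ 2 ^ (a + 1))
    (hdet : IsUnit (binomChiMatrix (2 ^ (a + 1))).det) :
    (binomChiMatrix (2 ^ (a + 1) + b)).det = (binomChiMatrix (2 ^ (a + 1))).det *
      ((∏ k ∈ range b, halfWeight (a + 1) k ^ 2 / 3) * (binomChiMatrix b).det) := by
  set A := binomChiMatrix (2 ^ (a + 1)) with hA
  let _ : Invertible A := A.invertibleOfIsUnitDet hdet
  set ι := Fin.castLE hb
  have hX : ⅟A * (signMatrix (a + 1) * A).submatrix id ι =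
      (intertwiner (a + 1)).submatrix id ι := by
    rw [← binomChiMatrix_mul_intertwiner, submatrix_mul _ _ _ id _ Function.bijective_id,
      submatrix_id_id, Matrix.invOf_mul_cancel_left]
  have hCX : (A * signMatrix (a + 1)).submatrix ι id * (intertwiner (a + 1)).submatrix id ι =
      -((3 : ℚ)⁻¹ • (weightMatrix (a + 1) b * binomChiMatrix b * weightMatrix (a + 1) b)) := by
    rw [← submatrix_mul _ _ _ id _ Function.bijective_id,
      ← inv_smul_smul₀ (three_ne_zero (α := ℚ)) (A * signMatrix (a + 1) * intertwiner (a + 1)),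
      binomChiMatrix_mul_signMatrix_mul_intertwiner]
    ext i j
    simp [weightMatrix, binomChiMatrix, diagonal_mul, mul_diagonal, ι]
  rw [← det_submatrix_equiv_self finSumFinEquiv, binomChiMatrix_two_pow_add_submatrix hb,
    det_fromBlocks₁₁, Matrix.mul_assoc, hX, hCX, zero_sub, neg_neg, det_smul, det_mul, det_mul,
    weightMatrix, det_diagonal, Fintype.card_fin, Fin.prod_univ_eq_prod_range (halfWeight (a + 1)),
    prod_div_distrib, prod_pow, prod_const, card_range, ← hA, inv_pow]
  ring

lemma beebF_ne_zero (n : ℕ) : beebF n ≠ 0 := by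
  induction n using beebF.induct with
  | case1 | case2 => simp [beebF]
  | case3 n h ih => rw [beebF, if_pos h]; exact mul_ne_zero three_ne_zero ih
  | case4 n h ih => rw [beebF, if_neg h]; exact div_ne_zero ih three_ne_zero

lemma beebF_two_pow_succ_add {a k : ℕ} (hk : k < 2 ^ (a + 1)) :
    beebF (2 ^ (a + 1) + k) = halfWeight (a + 1) k ^ 2 / 3 * beebF k := by
  have hpow : 2 ^ (a + 1) = 2 * 2 ^ a := pow_succ' 2 a
  obtain ⟨m, hm⟩ : ∃ m, 2 ^ (a + 1) + k = m + 2 := ⟨2 ^ (a + 1) + k - 2, by omega⟩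
  have hlog : Nat.log2 (m + 2) = a + 1 := by
    rw [Nat.log2_eq_log_two]
    exact Nat.log_eq_of_pow_le_of_lt_pow (by omega) (by rw [pow_succ 2 (a + 1)]; omega)
  rw [hm, beebF, hlog, show m + 2 - 2 ^ (a + 1) = k by omega, halfWeight]
  split_ifs <;> ring

lemma prod_range_two_pow_succ_add_beebF {a b : ℕ} (hb : b ≤ 2 ^ (a + 1)) :
    ∏ k ∈ range (2 ^ (a + 1) + b), beebF k = (∏ k ∈ range (2 ^ (a + 1)), beebF k) *
      ((∏ k ∈ range b, halfWeight (a + 1) k ^ 2 / 3) * ∏ k ∈ range b, beebF k) := by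
  rw [prod_range_add, ← prod_mul_distrib]
  congr 1
  exact prod_congr rfl fun k hk => beebF_two_pow_succ_add (by rw [mem_range] at hk; omega)

lemma exists_eq_two_pow_succ_add {n : ℕ} (hn : 3 ≤ n) :
    ∃ a b, 0 < b ∧ b ≤ 2 ^ (a + 1) ∧ n = 2 ^ (a + 1) + b := by
  have hle := Nat.pow_log_le_self 2 (show n - 1 ≠ 0 by omega)
  have hlt := Nat.lt_pow_succ_log_self one_lt_two (n - 1)
  have hlog : 1 ≤ Nat.log 2 (n - 1) := Nat.le_log_of_pow_le one_lt_two (by omega)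
  obtain ⟨a, ha⟩ : ∃ a, Nat.log 2 (n - 1) = a + 1 := ⟨_, (Nat.sub_add_cancel hlog).symm⟩
  rw [ha] at hle
  rw [ha, pow_succ 2 (a + 1)] at hlt
  exact ⟨a, n - 2 ^ (a + 1), by omega, by omega, by omega⟩

theorem det_beeblebrox (n : ℕ) :
    Matrix.det (Matrix.of fun s t : Fin n =>
      chiB (Nat.choose (s.val + t.val) s.val)) =
      ∏ k ∈ Finset.range n, beebF k := by
  induction n using Nat.strong_induction_on with
  | _ n ih =>
  obtain hn | hn := Nat.lt_or_ge n 3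
  · interval_cases n <;> simp [det_fin_two, chiB, beebF, prod_range_succ]
  obtain ⟨a, b, hb₀, hb, rfl⟩ := exists_eq_two_pow_succ_add hn
  have hA : (binomChiMatrix (2 ^ (a + 1))).det = ∏ k ∈ range (2 ^ (a + 1)), beebF k :=
    ih _ (by omega)
  have hB : (binomChiMatrix b).det = ∏ k ∈ range b, beebF k := ih b (by omega)
  have hunit : IsUnit (binomChiMatrix (2 ^ (a + 1))).det :=
    hA ▸ (prod_ne_zero_iff.2 fun k _ => beebF_ne_zero k).isUnit
  change (binomChiMatrix (2 ^ (a + 1) + b)).det = _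
  rw [det_binomChiMatrix_two_pow_succ_add hb hunit, hA, hB, prod_range_two_pow_succ_add_beebF hb]
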